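/- For b ≥ 1 and a coprime to b, inv(a,b) + inv(-a,b) = (b-1)(b-2)/2, where -a is interpreted as b - a mod b. -/

import Mathlib

/-- The sawtooth function ((x)): 0 if x is an integer, else x - ⌊x⌋ - 1/2. -/
def sawtooth (x : ℚ) : ℚ := if x.den = 1 then 0 else x - ⌊x⌋ - 1/2

/-- The Dedekind sum s(a,b) = ∑_{i=1}^{b-1} (i/b)·((a·i/b)). -/
def dedekindSum (a b : ℕ) : ℚ :=
  ∑ i ∈ Finset.Icc 1 (b - 1), (i : ℚ) / (b : ℚ) * sawtooth ((a * i : ℕ) / (b : ℚ))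

/-- Representative of a·x mod b in {1, ..., b}. -/
def modRep (a b x : ℕ) : ℕ := if a * x % b = 0 then b else a * x % b

/-- inv(a,b): number of pairs 1 ≤ i < j ≤ b with a·i mod b > a·j mod b
(representatives in {1,...,b}). -/
def invNum (a b : ℕ) : ℕ :=
  ((Finset.Icc 1 b ×ˢ Finset.Icc 1 b).filter
    (fun p => p.1 < p.2 ∧ modRep a b p.2 < modRep a b p.1)).card

/-!
Replacing `a` by `-a` reflects the residues: for `0 < x < b` the representative of `-a x` is
`b` minus that of `a x`, and these lie in `1, …, b - 1` and are distinct since `a` is a unit.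
So each pair `i < j < b` is an inversion of exactly one of `a`, `-a`, while a pair with
`j = b` is an inversion of neither, `b` having the largest representative `b`. Hence
`inv(a, b) + inv(-a, b)` counts the pairs `i < j` in `1, …, b - 1`.
-/

open Finset

def ltPairs (n : ℕ) : Finset (ℕ × ℕ) :=
  (Icc 1 n ×ˢ Icc 1 n).filter fun p => p.1 < p.2

section modRep

variable {a b x : ℕ}

theorem modRep_self (a b : ℕ) : modRep a b b = b := by
  simp [modRep]

theorem modRep_le (hb : 0 < b) : modRep a b x ≤ b := by
  unfold modRep
  split_ifs
  exacts [le_rfl, (Nat.mod_lt _ hb).le]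

theorem modRep_of_not_dvd (hx : ¬ b ∣ a * x) : modRep a b x = a * x % b :=
  if_neg (mt Nat.dvd_of_mod_eq_zero hx)

theorem modRep_pos_of_not_dvd (hx : ¬ b ∣ a * x) : 0 < modRep a b x := by
  rw [modRep_of_not_dvd hx]
  exact Nat.pos_of_ne_zero (mt Nat.dvd_of_mod_eq_zero hx)

theorem not_dvd_mul_of_coprime (h : a.Coprime b) (hx0 : 0 < x) (hxb : x < b) : ¬ b ∣ a * x :=
  fun hdvd => (Nat.le_of_dvd hx0 (h.symm.dvd_of_dvd_mul_left hdvd)).not_gt hxb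

theorem modRep_sub_mod (hb : 0 < b) (hx : ¬ b ∣ a * x) :
    modRep (b - a % b) b x = b - modRep a b x := by
  have : NeZero b := ⟨hb.ne'⟩
  have hneg : (((b - a % b) * x : ℕ) : ZMod b) = -((a * x : ℕ) : ZMod b) := by
    push_cast [Nat.cast_sub (Nat.mod_lt a hb).le, ZMod.natCast_self, ZMod.natCast_mod]
    ring
  have hax : ((a * x : ℕ) : ZMod b) ≠ 0 := by
    rwa [Ne, ZMod.natCast_eq_zero_iff]
  have hmod : (b - a % b) * x % b = b - a * x % b := by
    rw [← ZMod.val_natCast, hneg, ZMod.neg_val, if_neg hax, ZMod.val_natCast]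
  have hpos := modRep_pos_of_not_dvd hx
  rw [modRep_of_not_dvd hx] at hpos ⊢
  rw [modRep, hmod, if_neg]
  have := Nat.mod_lt (a * x) hb
  omega

theorem modRep_injOn (h : a.Coprime b) : Set.InjOn (modRep a b) (Set.Ico 1 b) := by
  intro i ⟨hi0, hib⟩ j ⟨hj0, hjb⟩ hij
  rw [modRep_of_not_dvd (not_dvd_mul_of_coprime h hi0 hib),
    modRep_of_not_dvd (not_dvd_mul_of_coprime h hj0 hjb)] at hij
  exact (Nat.ModEq.cancel_left_of_coprime h.symm hij).eq_of_lt_of_lt hib hjb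

end modRep

theorem card_ltPairs (n : ℕ) : #(ltPairs n) = n * (n - 1) / 2 := by
  have hrow : ∀ j ∈ Icc 1 n, #((Icc 1 n).filter (· < j)) = j - 1 := fun j hj => by
    rw [show (Icc 1 n).filter (· < j) = Ico 1 j by ext; simp at hj ⊢; omega, Nat.card_Ico]
  calc #(ltPairs n) = ∑ j ∈ Icc 1 n, #((Icc 1 n).filter (· < j)) := by
        rw [ltPairs, card_filter, sum_product_right]; simp only [card_filter]
    _ = ∑ j ∈ range n, j := by
        rw [sum_congr rfl hrow, ← Ico_add_one_right_eq_Icc, sum_Ico_eq_sum_range]; simp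
    _ = n * (n - 1) / 2 := sum_range_id n

theorem invNum_eq_card_filter_ltPairs {a b : ℕ} (hb : 0 < b) :
    invNum a b = #((ltPairs (b - 1)).filter fun p => modRep a b p.2 < modRep a b p.1) := by
  rw [invNum, ltPairs, filter_filter]
  congr 1
  ext ⟨i, j⟩
  simp only [mem_filter, mem_product, mem_Icc]
  have hjb : j = b → ¬ modRep a b j < modRep a b i := by
    rintro rfl
    rw [modRep_self]
    exact (modRep_le hb).not_gt
  grind

theorem modRep_sub_mod_lt_iff {a b i j : ℕ} (h : a.Coprime b) (hi : i ∈ Set.Ico 1 b)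
    (hj : j ∈ Set.Ico 1 b) (hij : i ≠ j) :
    modRep (b - a % b) b j < modRep (b - a % b) b i ↔ ¬ modRep a b j < modRep a b i := by
  have hb : 0 < b := (Nat.zero_le i).trans_lt hi.2
  have hi' := not_dvd_mul_of_coprime h hi.1 hi.2
  have hj' := not_dvd_mul_of_coprime h hj.1 hj.2
  have hne : modRep a b i ≠ modRep a b j := fun heq => hij (modRep_injOn h hi hj heq)
  rw [modRep_sub_mod hb hi', modRep_sub_mod hb hj']
  have := modRep_le (a := a) (x := i) hb
  have := modRep_le (a := a) (x := j) hb
  omega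

theorem stmt3 (a b : ℕ) (hb : 1 ≤ b) (h : Nat.Coprime a b) :
    invNum a b + invNum (b - a % b) b = (b - 1) * (b - 2) / 2 := by
  have hreflect : ∀ p ∈ ltPairs (b - 1), modRep (b - a % b) b p.2 < modRep (b - a % b) b p.1 ↔
      ¬ modRep a b p.2 < modRep a b p.1 := fun p hp => by
    simp only [ltPairs, mem_filter, mem_product, mem_Icc] at hp
    exact modRep_sub_mod_lt_iff h ⟨hp.1.1.1, by omega⟩ ⟨hp.1.2.1, by omega⟩ hp.2.ne
  rw [invNum_eq_card_filter_ltPairs hb, invNum_eq_card_filter_ltPairs hb, filter_congr hreflect,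
    card_filter_add_card_filter_not, card_ltPairs, Nat.sub_sub]
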